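/- For n = 3, the colored BKL braid relation BKL_1(q_2,t)·BKL_2(q_1,t)·BKL_1(q_1,t) = BKL_2(q_1,t)·BKL_1(q_1,t)·BKL_2(q_2,t) holds over Z[q_1^{±1}, q_2^{±1}, t^{±1}], where BKL_1(q,t) = [[q^2 t, 0, q^2-q],[0,0,q],[0,1,1-q]] and BKL_2(q,t) = [[0,q,0],[1,1-q,0],[0,t(q^2-q),q^2 t]]. -/

import Mathlib

/-- The ring `ℤ[q₁^{±1}, q₂^{±1}, t^{±1}]`. -/
abbrev RQQT : Type := AddMonoidAlgebra ℤ (Fin 3 →₀ ℤ)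

noncomputable def q1 : RQQT := AddMonoidAlgebra.single (Finsupp.single 0 1) 1
noncomputable def q2 : RQQT := AddMonoidAlgebra.single (Finsupp.single 1 1) 1
noncomputable def t : RQQT := AddMonoidAlgebra.single (Finsupp.single 2 1) 1

noncomputable def BKL1 (q : RQQT) : Matrix (Fin 3) (Fin 3) RQQT :=
  !![q ^ 2 * t, 0, q ^ 2 - q; 0, 0, q; 0, 1, 1 - q]

noncomputable def BKL2 (q : RQQT) : Matrix (Fin 3) (Fin 3) RQQT :=
  !![0, q, 0; 1, 1 - q, 0; 0, t * (q ^ 2 - q), q ^ 2 * t]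

theorem BKL1_mul_BKL2_mul_BKL1 (q q' : RQQT) :
    BKL1 q' * BKL2 q * BKL1 q = BKL2 q * BKL1 q * BKL2 q' := by
  ext i j : 1
  fin_cases i <;> fin_cases j <;>
    simp [BKL1, BKL2, Matrix.mul_apply, Fin.sum_univ_three] <;> ring

theorem stmt13 :
    BKL1 q2 * BKL2 q1 * BKL1 q1 = BKL2 q1 * BKL1 q1 * BKL2 q2 :=
  BKL1_mul_BKL2_mul_BKL1 q1 q2
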